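/- arXiv:math/0604555 — 8 statements merged into one kernel-verified Lean document; each statement's English description precedes it below -/
import Mathlib

section
/- For every μ > 1 and every M > 0 there exist β > 0 and a Borel probability measure G on (0,∞) (which may be taken to be a Gamma distribution) such that μ·∫₀^∞ e^{−βt} dG(t) = 1 and (μ − 1)/(β μ² ∫₀^∞ t e^{−βt} dG(t)) > M. In other words, the constant n₁ cannot be bounded from above over life-time distributions satisfying the Malthusian relation. -/
open MeasureTheory Set

lemma integrable_dirac' (f : ℝ → ℝ) (hf : Measurable f) (a : ℝ) :
    Integrable f (Measure.dirac a) := by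
  refine ⟨hf.aestronglyMeasurable, ?_⟩
  have h : ∫⁻ x, ‖f x‖₊ ∂(Measure.dirac a) = ‖f a‖₊ :=
    lintegral_dirac' a (measurable_coe_nnreal_ennreal.comp hf.nnnorm)
  simp [HasFiniteIntegral, h]

lemma integral_two_point (f : ℝ → ℝ) (hf : Measurable f) {p q : ℝ} (hp : 0 ≤ p) (hq : 0 ≤ q)
    (a b : ℝ) :
    ∫ x, f x ∂((ENNReal.ofReal p) • Measure.dirac a + (ENNReal.ofReal q) • Measure.dirac b)
      = p * f a + q * f b := by
  rw [integral_add_measure ((integrable_dirac' f hf a).smul_measure ENNReal.ofReal_ne_top)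
      ((integrable_dirac' f hf b).smul_measure ENNReal.ofReal_ne_top),
    integral_smul_measure, integral_smul_measure, integral_dirac, integral_dirac,
    ENNReal.toReal_ofReal hp, ENNReal.toReal_ofReal hq, smul_eq_mul, smul_eq_mul]

theorem stmt_7 (μ : ℝ) (hμ : 1 < μ) (M : ℝ) (hM : 0 < M) :
    ∃ (β : ℝ) (ν : Measure ℝ), 0 < β ∧ IsProbabilityMeasure ν ∧ ν (Iic 0) = 0 ∧
      μ * ∫ t, Real.exp (-β * t) ∂ν = 1 ∧
      (μ - 1) / (β * μ ^ 2 * ∫ t, t * Real.exp (-β * t) ∂ν) > M := by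
  have hμ0 : (0:ℝ) < μ := by linarith
  set ε : ℝ := (μ - 1) / (2 * μ ^ 2 * M) with hε
  have hε0 : 0 < ε := by
    apply div_pos (by linarith)
    positivity
  have hlog : 0 < Real.log μ := Real.log_pos hμ
  set a : ℝ := min (ε / 2) (Real.log μ) with ha
  have ha0 : 0 < a := lt_min (by linarith) hlog
  set b : ℝ := max (Real.log μ + 1) (8 / ε) with hb
  have hab : a < b := by
    calc a ≤ Real.log μ := min_le_right _ _
    _ < Real.log μ + 1 := by linarith
    _ ≤ b := le_max_left _ _
  have hb0 : 0 < b := lt_trans ha0 hab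
  -- e^{-b} < 1/μ
  have heb : Real.exp (-b) < 1 / μ := by
    rw [show (1:ℝ)/μ = Real.exp (-Real.log μ) by
      rw [Real.exp_neg, Real.exp_log hμ0, one_div]]
    apply Real.exp_lt_exp.2
    have : Real.log μ + 1 ≤ b := le_max_left _ _
    linarith
  -- 1/μ ≤ e^{-a}
  have hea : 1 / μ ≤ Real.exp (-a) := by
    rw [show (1:ℝ)/μ = Real.exp (-Real.log μ) by
      rw [Real.exp_neg, Real.exp_log hμ0, one_div]]
    apply Real.exp_le_exp.2
    have : a ≤ Real.log μ := min_le_right _ _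
    linarith
  have hexpab : Real.exp (-b) < Real.exp (-a) := Real.exp_lt_exp.2 (by linarith)
  set p : ℝ := (1 / μ - Real.exp (-b)) / (Real.exp (-a) - Real.exp (-b)) with hp
  have hden : 0 < Real.exp (-a) - Real.exp (-b) := by linarith
  have hp0 : 0 < p := div_pos (by linarith) hden
  have hp1 : p ≤ 1 := by
    rw [hp, div_le_one hden]; linarith
  have hq0 : 0 ≤ 1 - p := by linarith
  refine ⟨1, (ENNReal.ofReal p) • Measure.dirac a + (ENNReal.ofReal (1 - p)) • Measure.dirac b,
    one_pos, ?_, ?_, ?_, ?_⟩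
  · constructor
    simp only [Measure.add_apply, Measure.smul_apply, Measure.dirac_apply' _ MeasurableSet.univ,
      mem_univ, indicator_of_mem, smul_eq_mul, mul_one, Pi.one_apply]
    rw [← ENNReal.ofReal_add hp0.le hq0]
    norm_num
  · simp only [Measure.add_apply, Measure.smul_apply, Measure.dirac_apply' _ measurableSet_Iic,
      smul_eq_mul]
    rw [indicator_of_notMem (by simpa using ha0), indicator_of_notMem (by simpa using hb0)]
    simp
  · rw [integral_two_point (fun t => Real.exp (-1 * t)) (by fun_prop) hp0.le hq0]
    simp only [neg_one_mul]
    have hkey : p * Real.exp (-a) + (1 - p) * Real.exp (-b) = 1 / μ := by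
      rw [hp]; field_simp; ring
    rw [hkey]
    field_simp
  · have hI : (∫ t, t * Real.exp (-1 * t)
        ∂((ENNReal.ofReal p) • Measure.dirac a + (ENNReal.ofReal (1 - p)) • Measure.dirac b))
        = p * (a * Real.exp (-1 * a)) + (1 - p) * (b * Real.exp (-1 * b)) :=
      integral_two_point (fun t => t * Real.exp (-1 * t)) (by fun_prop) hp0.le hq0 a b
    rw [hI]
    -- bound the integral: I ≤ ε and I > 0
    have hIa : 0 < a * Real.exp (-1 * a) := by positivity
    have hbe : b * Real.exp (-1 * b) ≤ ε / 2 := by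
      have h1 : b ^ 2 / 4 ≤ Real.exp b := by
        have h2 : b / 2 ≤ Real.exp (b / 2) := (Real.add_one_le_exp (b/2)).trans' (by linarith)
        have := mul_le_mul h2 h2 (by linarith) (Real.exp_pos _).le
        rw [← Real.exp_add] at this
        calc b ^ 2 / 4 = (b/2) * (b/2) := by ring
          _ ≤ Real.exp (b/2 + b/2) := this
          _ = Real.exp b := by ring_nf
      have h8 : 8 / ε ≤ b := le_max_right _ _
      have h3 : b * Real.exp (-1 * b) ≤ 4 / b := by
        have hE := Real.exp_pos b
        rw [neg_one_mul, Real.exp_neg, ← div_eq_mul_inv, div_le_div_iff₀ hE hb0]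
        nlinarith
      calc b * Real.exp (-1 * b) ≤ 4 / b := h3
        _ ≤ ε / 2 := by
            rw [div_le_div_iff₀ hb0 (by norm_num)]
            have : 8 / ε ≤ b := h8
            rw [div_le_iff₀ hε0] at this
            linarith
    have hIle : p * (a * Real.exp (-1 * a)) + (1 - p) * (b * Real.exp (-1 * b)) ≤ ε := by
      have h1 : p * (a * Real.exp (-1 * a)) ≤ a := by
        have he1 : Real.exp (-1 * a) ≤ 1 := by
          rw [Real.exp_le_one_iff]; linarith
        nlinarith
      have h2 : (1 - p) * (b * Real.exp (-1 * b)) ≤ ε / 2 := by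
        have hbe0 : 0 ≤ b * Real.exp (-1 * b) := by positivity
        nlinarith
      have h3 : a ≤ ε / 2 := min_le_left _ _
      linarith
    have hIpos : 0 < p * (a * Real.exp (-1 * a)) + (1 - p) * (b * Real.exp (-1 * b)) := by
      have : 0 ≤ (1 - p) * (b * Real.exp (-1 * b)) := by positivity
      nlinarith
    -- conclude
    rw [gt_iff_lt, lt_div_iff₀ (by positivity)]
    have key : μ ^ 2 * (p * (a * Real.exp (-1 * a)) + (1 - p) * (b * Real.exp (-1 * b))) * M
        ≤ μ ^ 2 * ε * M := by
      apply mul_le_mul_of_nonneg_right _ hM.le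
      exact mul_le_mul_of_nonneg_left hIle (by positivity)
    have hεval : μ ^ 2 * ε * M = (μ - 1) / 2 := by
      rw [hε]; field_simp
    calc M * (1 * μ ^ 2 * (p * (a * Real.exp (-1 * a)) + (1 - p) * (b * Real.exp (-1 * b))))
        = μ ^ 2 * (p * (a * Real.exp (-1 * a)) + (1 - p) * (b * Real.exp (-1 * b))) * M := by ring
      _ ≤ (μ - 1) / 2 := by rw [← hεval]; exact key
      _ < μ - 1 := by linarith
end

section
/- For every real μ > 1 and every integer n ≥ 1, ∫₀^∞ (1 − (1 − μ^{−u})^n) du = H_n / log μ, where H_n = Σ_{j=1}^n 1/j is the n-th harmonic number. -/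
/-!
With `c = log μ` and `x = μ^(-u) = e^{-cu}`, the geometric sum `1 - (1 - x)^n = ∑_{k<n} (1 - x)^k x`
splits the integrand into terms `(1 - e^{-cu})^k e^{-cu}`, each the derivative of
`(1 - e^{-cu})^(k+1) / ((k+1) c)`, which rises from `0` at `u = 0` to `1 / ((k+1) c)` at infinity.
Summing gives `H_n / log μ`.
-/

open MeasureTheory Set Filter Topology Real

theorem one_sub_one_sub_pow_eq_sum {R : Type*} [CommRing R] (x : R) (n : ℕ) :
    1 - (1 - x) ^ n = ∑ k ∈ Finset.range n, (1 - x) ^ k * x := by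
  simpa [Finset.sum_mul] using (geom_sum_mul_neg (1 - x) n).symm

section ExpIntegral

variable {c : ℝ}

theorem hasDerivAt_one_sub_exp_neg_mul_pow_succ_div (hc : c ≠ 0) (u : ℝ) (k : ℕ) :
    HasDerivAt (fun u => (1 - exp (-(c * u))) ^ (k + 1) / ((k + 1) * c))
      ((1 - exp (-(c * u))) ^ k * exp (-(c * u))) u := by
  refine ((((hasDerivAt_id' u).const_mul c).neg.exp.const_sub 1).pow (k + 1)).div_const
    ((k + 1) * c) |>.congr_deriv ?_
  simp only [Pi.neg_apply, Nat.add_sub_cancel, Nat.cast_add_one]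
  field_simp

theorem tendsto_one_sub_exp_neg_mul_pow_atTop (hc : 0 < c) (m : ℕ) :
    Tendsto (fun u => (1 - exp (-(c * u))) ^ m) atTop (𝓝 1) := by
  have h : Tendsto (fun u => exp (-(c * u))) atTop (𝓝 0) :=
    tendsto_exp_atBot.comp (tendsto_neg_atTop_atBot.comp (tendsto_id.const_mul_atTop hc))
  simpa using (h.const_sub 1).pow m

theorem one_sub_exp_neg_mul_pow_mul_exp_nonneg (hc : 0 < c) {u : ℝ} (hu : 0 < u) (k : ℕ) :
    0 ≤ (1 - exp (-(c * u))) ^ k * exp (-(c * u)) := by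
  have : exp (-(c * u)) ≤ 1 := exp_le_one_iff.mpr (by nlinarith)
  have := exp_pos (-(c * u))
  positivity

theorem integrableOn_one_sub_exp_neg_mul_pow_mul_exp (hc : 0 < c) (k : ℕ) :
    IntegrableOn (fun u => (1 - exp (-(c * u))) ^ k * exp (-(c * u))) (Ioi 0) :=
  integrableOn_Ioi_deriv_of_nonneg'
    (fun u _ => hasDerivAt_one_sub_exp_neg_mul_pow_succ_div hc.ne' u k)
    (fun _ hu => one_sub_exp_neg_mul_pow_mul_exp_nonneg hc hu k)
    ((tendsto_one_sub_exp_neg_mul_pow_atTop hc (k + 1)).div_const _)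

theorem integral_one_sub_exp_neg_mul_pow_mul_exp (hc : 0 < c) (k : ℕ) :
    ∫ u in Ioi 0, (1 - exp (-(c * u))) ^ k * exp (-(c * u)) = 1 / ((k + 1) * c) := by
  rw [integral_Ioi_of_hasDerivAt_of_nonneg'
    (fun u _ => hasDerivAt_one_sub_exp_neg_mul_pow_succ_div hc.ne' u k)
    (fun _ hu => one_sub_exp_neg_mul_pow_mul_exp_nonneg hc hu k)
    ((tendsto_one_sub_exp_neg_mul_pow_atTop hc (k + 1)).div_const _)]
  simp

end ExpIntegral

theorem stmt_10_general (μ : ℝ) (hμ : 1 < μ) (n : ℕ) :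
    ∫ u in Ioi (0:ℝ), (1 - (1 - μ ^ (-u)) ^ n) =
      (∑ j ∈ Finset.range n, (1 : ℝ) / (j + 1)) / Real.log μ := by
  have hc : 0 < log μ := log_pos hμ
  have hrpow (u : ℝ) : μ ^ (-u) = exp (-(log μ * u)) := by
    rw [rpow_def_of_pos (by linarith), mul_neg]
  calc ∫ u in Ioi (0:ℝ), (1 - (1 - μ ^ (-u)) ^ n)
      = ∫ u in Ioi (0:ℝ), ∑ k ∈ Finset.range n,
          (1 - exp (-(log μ * u))) ^ k * exp (-(log μ * u)) := by
        simp only [hrpow, one_sub_one_sub_pow_eq_sum]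
    _ = ∑ k ∈ Finset.range n, 1 / ((k + 1) * log μ) := by
        rw [integral_finsetSum _ fun k _ => integrableOn_one_sub_exp_neg_mul_pow_mul_exp hc k]
        simp only [integral_one_sub_exp_neg_mul_pow_mul_exp hc]
    _ = (∑ j ∈ Finset.range n, (1 : ℝ) / (j + 1)) / log μ := by
        simp only [Finset.sum_div, div_div]

theorem stmt_10 (μ : ℝ) (hμ : 1 < μ) (n : ℕ) (hn : 1 ≤ n) :
    ∫ u in Ioi (0:ℝ), (1 - (1 - μ ^ (-u)) ^ n) =
      (∑ j ∈ Finset.range n, (1 : ℝ) / (j + 1)) / Real.log μ :=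
  stmt_10_general μ hμ n
end

section
/- Let π be a probability mass function on ℕ with probability generating function f(s) = Σ_{k≥0} π_k s^k and mean μ = Σ_{k≥0} k·π_k satisfying 1 < μ < ∞, let q ∈ [0,1) be the fixed point of f in [0,1), and set h(s) = (1 − f(s))/(1 − s). Let f_i denote the i-th iterate of f (f_0 the identity), define g(s) = ((μ − 1)/μ)·Σ_{i=0}^∞ f_i(s)/μ^i, γ(s) = (1 − g(s))/(1 − s), and κ = (μ − 1)/(μ·log μ). Then for every s ∈ (q,1), the three series below converge absolutely and γ(s) + κ·log(1 − s) = ((μ − 1)/μ)·Σ_{i=0}^∞ μ^{−i}·(1 − f_i(s))/(1 − s) − (κ/μ)·Σ_{i=0}^∞ μ^{−i}·h(f_i(s))·((1 − f_i(s))/(1 − s))·log(h(f_i(s))) + (κ/μ)·Σ_{i=0}^∞ μ^{−i}·(μ − h(f_i(s)))·((1 − f_i(s))/(1 − s))·log(1 − f_i(s)). -/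
/-! For `s ∈ (q, 1)` the orbit `f^[i] s` stays in `[0, s]`: the generating function is monotone
on `[0, 1]` and, being convex with the fixed points `q` and `1`, lies below the diagonal on
`[q, 1]`. Hence `1 - f^[i] s ∈ [1 - s, 1]` and `h (f^[i] s) = (1 - f^[i+1] s) / (1 - f^[i] s)`
lies in `[1 - s, (1 - s)⁻¹]`, so each series is `μ^(-i)` times a bounded factor. The formula for
`γ` follows from `(μ - 1) / μ * ∑ μ^(-i) = 1`. Since `h (f^[i] s) * (1 - f^[i] s) = 1 - f^[i+1] s`,
the `i`-th term of the third series minus that of the second is `a i - a (i + 1)` with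
`a i = μ^(1-i) * (1 - f^[i] s) / (1 - s) * log (1 - f^[i] s)`, and the telescoping sum is
`a 0 = μ * log (1 - s)`. -/

open Set Filter Topology Asymptotics

noncomputable def pgf (p : ℕ → ℝ) (x : ℝ) : ℝ := ∑' k, p k * x ^ k

section pgf

variable {p : ℕ → ℝ}

lemma summable_mul_pow_of_mem_Icc (hp0 : ∀ k, 0 ≤ p k) (hp : Summable p) {x : ℝ}
    (hx : x ∈ Icc (0 : ℝ) 1) : Summable fun k => p k * x ^ k :=
  hp.of_nonneg_of_le (fun k => mul_nonneg (hp0 k) (pow_nonneg hx.1 k))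
    fun k => mul_le_of_le_one_right (hp0 k) (pow_le_one₀ hx.1 hx.2)

lemma pgf_nonneg (hp0 : ∀ k, 0 ≤ p k) {x : ℝ} (hx : 0 ≤ x) : 0 ≤ pgf p x :=
  tsum_nonneg fun k => mul_nonneg (hp0 k) (pow_nonneg hx k)

lemma pgf_one (hp1 : ∑' k, p k = 1) : pgf p 1 = 1 := by
  simpa [pgf] using hp1

lemma monotoneOn_pgf (hp0 : ∀ k, 0 ≤ p k) (hp : Summable p) : MonotoneOn (pgf p) (Icc 0 1) :=
  fun _ hx _ hy hxy =>
    Summable.tsum_le_tsum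
      (fun k => mul_le_mul_of_nonneg_left (pow_le_pow_left₀ hx.1 hxy k) (hp0 k))
      (summable_mul_pow_of_mem_Icc hp0 hp hx) (summable_mul_pow_of_mem_Icc hp0 hp hy)

lemma convexOn_pgf (hp0 : ∀ k, 0 ≤ p k) (hp : Summable p) : ConvexOn ℝ (Icc 0 1) (pgf p) := by
  refine ⟨convex_Icc 0 1, fun x hx y hy a b ha hb hab => ?_⟩
  have hxy : a • x + b • y ∈ Icc (0 : ℝ) 1 := convex_Icc 0 1 hx hy ha hb hab
  have hsx := summable_mul_pow_of_mem_Icc hp0 hp hx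
  have hsy := summable_mul_pow_of_mem_Icc hp0 hp hy
  calc pgf p (a • x + b • y)
      ≤ ∑' k, (a * (p k * x ^ k) + b * (p k * y ^ k)) := by
        refine Summable.tsum_le_tsum (fun k => ?_) (summable_mul_pow_of_mem_Icc hp0 hp hxy)
          ((hsx.mul_left a).add (hsy.mul_left b))
        have := (convexOn_pow k).2 (mem_Ici.2 hx.1) (mem_Ici.2 hy.1) ha hb hab
        simp only [smul_eq_mul] at this ⊢
        linear_combination mul_le_mul_of_nonneg_left this (hp0 k)
    _ = a • pgf p x + b • pgf p y := by
        rw [(hsx.mul_left a).tsum_add (hsy.mul_left b), tsum_mul_left, tsum_mul_left]; rfl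

lemma pgf_le_self (hp0 : ∀ k, 0 ≤ p k) (hp : Summable p) (hp1 : ∑' k, p k = 1) {q x : ℝ}
    (hq : q ∈ Ico (0 : ℝ) 1) (hqfix : pgf p q = q) (hx : x ∈ Icc q 1) : pgf p x ≤ x := by
  rcases hx.1.eq_or_lt with rfl | hqx
  · exact hqfix.le
  have hslope := (convexOn_pgf hp0 hp).secant_mono (a := q) ⟨hq.1, hq.2.le⟩
    ⟨hq.1.trans hx.1, hx.2⟩ ⟨zero_le_one, le_rfl⟩ hqx.ne' hq.2.ne' hx.2
  rw [pgf_one hp1, hqfix, div_self (sub_ne_zero.2 hq.2.ne'), div_le_one (sub_pos.2 hqx)] at hslope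
  linarith

lemma mapsTo_pgf_Icc (hp0 : ∀ k, 0 ≤ p k) (hp : Summable p) (hp1 : ∑' k, p k = 1) {q s : ℝ}
    (hq : q ∈ Ico (0 : ℝ) 1) (hqfix : pgf p q = q) (hs : s ∈ Icc q 1) :
    MapsTo (pgf p) (Icc 0 s) (Icc 0 s) := fun _ hx =>
  ⟨pgf_nonneg hp0 hx.1,
    (monotoneOn_pgf hp0 hp ⟨hx.1, hx.2.trans hs.2⟩ ⟨hx.1.trans hx.2, hs.2⟩ hx.2).trans
      (pgf_le_self hp0 hp hp1 hq hqfix hs)⟩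

end pgf

lemma isBigO_one_of_mem_Icc {α : Type*} {l : Filter α} {b : α → ℝ} {m M : ℝ}
    (hb : ∀ i, b i ∈ Icc m M) : b =O[l] (fun _ => (1 : ℝ)) :=
  (isBigO_one_iff ℝ).2 <|
    isBoundedUnder_of ⟨max |m| |M|, fun i => abs_le_max_abs_abs (hb i).1 (hb i).2⟩

lemma abs_log_le_neg_log {c x : ℝ} (hc : 0 < c) (hx : x ∈ Icc c c⁻¹) :
    |Real.log x| ≤ -Real.log c := by
  have hlow := Real.log_le_log hc hx.1
  have hup := Real.log_le_log (hc.trans_le hx.1) hx.2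
  rw [Real.log_inv] at hup
  exact abs_le.2 ⟨by linarith, hup⟩

lemma hasSum_sub_succ {G : Type*} [AddCommGroup G] [TopologicalSpace G] [IsTopologicalAddGroup G]
    [T2Space G] {a : ℕ → G} (hs : Summable fun n => a n - a (n + 1))
    (ha : Tendsto a atTop (𝓝 0)) : HasSum (fun n => a n - a (n + 1)) (a 0) := by
  rw [hs.hasSum_iff_tendsto_nat]
  have hlim := (tendsto_const_nhds (x := a 0)).sub ha
  rw [sub_zero] at hlim
  exact hlim.congr fun n => (Finset.sum_range_sub' a n).symm

lemma zpow_neg_natCast_eq_inv_pow {α : Type*} [DivisionMonoid α] (a : α) (i : ℕ) :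
    a ^ (-(i : ℤ)) = a⁻¹ ^ i := by
  rw [zpow_neg, zpow_natCast, inv_pow]

section geometric

variable {μ : ℝ}

lemma hasSum_zpow_neg (hμ : 1 < μ) :
    HasSum (fun i : ℕ => μ ^ (-(i : ℤ))) (μ / (μ - 1)) := by
  have hgeo := hasSum_geometric_of_lt_one (inv_nonneg.2 (zero_le_one.trans hμ.le))
    (inv_lt_one_of_one_lt₀ hμ)
  have hμ0 : μ ≠ 0 := (zero_lt_one.trans hμ).ne'
  convert hgeo using 1
  · simp only [zpow_neg_natCast_eq_inv_pow]
  · field_simp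

lemma summable_zpow_neg_mul_of_isBigO_one (hμ : 1 < μ) {b : ℕ → ℝ}
    (hb : b =O[atTop] (fun _ => (1 : ℝ))) : Summable fun i : ℕ => μ ^ (-(i : ℤ)) * b i := by
  refine summable_of_isBigO_nat (hasSum_zpow_neg hμ).summable ?_
  simpa using (isBigO_refl (fun i : ℕ => μ ^ (-(i : ℤ))) atTop).mul hb

lemma one_sub_mul_tsum_div_pow_div (hμ : 1 < μ) {t : ℕ → ℝ}
    (ht : Summable fun i => t i / μ ^ i) (c : ℝ) :
    (1 - (μ - 1) / μ * ∑' i : ℕ, t i / μ ^ i) / c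
      = (μ - 1) / μ * ∑' i : ℕ, μ ^ (-(i : ℤ)) * ((1 - t i) / c) := by
  have hμ0 : μ ≠ 0 := (zero_lt_one.trans hμ).ne'
  have hμ1 : μ - 1 ≠ 0 := sub_ne_zero.2 hμ.ne'
  have hsplit : ∑' i : ℕ, μ ^ (-(i : ℤ)) * ((1 - t i) / c)
      = (μ / (μ - 1) - ∑' i : ℕ, t i / μ ^ i) / c := by
    rw [← (hasSum_zpow_neg hμ).tsum_eq, ← Summable.tsum_sub (hasSum_zpow_neg hμ).summable ht,
      ← tsum_div_const]
    congr 1 with i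
    rw [zpow_neg, zpow_natCast]
    ring
  rw [hsplit]
  field_simp

end geometric

section orbit

variable {μ s : ℝ} {t : ℕ → ℝ} {h : ℝ → ℝ}

lemma one_sub_orbit_mem_Icc (ht : ∀ i, t i ∈ Icc 0 s) (i : ℕ) :
    1 - t i ∈ Icc (1 - s) 1 :=
  ⟨by linarith [(ht i).2], by linarith [(ht i).1]⟩

lemma orbit_ratio_mem_Icc (hs : s < 1) (ht : ∀ i, t i ∈ Icc 0 s)
    (hh : ∀ i, h (t i) = (1 - t (i + 1)) / (1 - t i)) (i : ℕ) :
    h (t i) ∈ Icc (1 - s) (1 - s)⁻¹ := by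
  have hc : 0 < 1 - s := sub_pos.2 hs
  obtain ⟨hi, hi1⟩ := one_sub_orbit_mem_Icc ht i
  obtain ⟨hj, hj1⟩ := one_sub_orbit_mem_Icc ht (i + 1)
  have hpos : 0 < 1 - t i := hc.trans_le hi
  rw [hh, mem_Icc, le_div_iff₀ hpos, div_le_iff₀ hpos]
  constructor
  · nlinarith
  · calc 1 - t (i + 1) ≤ 1 := hj1
      _ = (1 - s)⁻¹ * (1 - s) := (inv_mul_cancel₀ hc.ne').symm
      _ ≤ (1 - s)⁻¹ * (1 - t i) := by gcongr

lemma orbit_terms_isBigO_one (hs : s < 1) (ht : ∀ i, t i ∈ Icc 0 s)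
    (hh : ∀ i, h (t i) = (1 - t (i + 1)) / (1 - t i)) :
    (fun i => (1 - t i) / (1 - s)) =O[atTop] (fun _ => (1 : ℝ)) ∧
    (fun i => h (t i)) =O[atTop] (fun _ => (1 : ℝ)) ∧
    (fun i => Real.log (h (t i))) =O[atTop] (fun _ => (1 : ℝ)) ∧
    (fun i => Real.log (1 - t i)) =O[atTop] (fun _ => (1 : ℝ)) := by
  have hc : 0 < 1 - s := sub_pos.2 hs
  have hc1 : 1 ≤ (1 - s)⁻¹ := one_le_inv₀ hc |>.2 (by linarith [(ht 0).1, (ht 0).2])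
  have hu := one_sub_orbit_mem_Icc ht
  have hlog : ∀ {b : ℕ → ℝ}, (∀ i, b i ∈ Icc (1 - s) (1 - s)⁻¹) →
      (fun i => Real.log (b i)) =O[atTop] (fun _ => (1 : ℝ)) := fun hb =>
    isBigO_one_of_mem_Icc fun i => abs_le.1 (abs_log_le_neg_log hc (hb i))
  refine ⟨isBigO_one_of_mem_Icc (m := 0) (M := (1 - s)⁻¹) fun i => ⟨?_, ?_⟩,
    isBigO_one_of_mem_Icc (orbit_ratio_mem_Icc hs ht hh), hlog (orbit_ratio_mem_Icc hs ht hh),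
    hlog fun i => ⟨(hu i).1, (hu i).2.trans hc1⟩⟩
  · exact div_nonneg (hc.le.trans (hu i).1) hc.le
  · exact div_le_div_of_nonneg_right (hu i).2 hc.le |>.trans_eq (one_div _)

lemma summable_orbit_series (hμ : 1 < μ) (hs : s < 1) (ht : ∀ i, t i ∈ Icc 0 s)
    (hh : ∀ i, h (t i) = (1 - t (i + 1)) / (1 - t i)) :
    Summable (fun i : ℕ => μ ^ (-(i : ℤ)) * ((1 - t i) / (1 - s))) ∧
    Summable (fun i : ℕ =>
      μ ^ (-(i : ℤ)) * h (t i) * ((1 - t i) / (1 - s)) * Real.log (h (t i))) ∧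
    Summable (fun i : ℕ =>
      μ ^ (-(i : ℤ)) * (μ - h (t i)) * ((1 - t i) / (1 - s)) * Real.log (1 - t i)) := by
  obtain ⟨hr, hH, hlogH, hlogu⟩ := orbit_terms_isBigO_one hs ht hh
  have key := fun (b : ℕ → ℝ) => summable_zpow_neg_mul_of_isBigO_one hμ (b := b)
  refine ⟨key _ hr, ?_, ?_⟩
  · refine (key (fun i => h (t i) * ((1 - t i) / (1 - s)) * Real.log (h (t i)))
      (by simpa only [mul_one] using (hH.mul hr).mul hlogH)).congr fun i => by ring
  · refine (key (fun i => (μ - h (t i)) * ((1 - t i) / (1 - s)) * Real.log (1 - t i))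
      (by simpa only [mul_one] using
        (((isBigO_const_one ℝ μ atTop).sub hH).mul hr).mul hlogu)).congr fun i => by ring

lemma tsum_sub_tsum_orbit_series (hμ : 1 < μ) (hs : s < 1) (ht : ∀ i, t i ∈ Icc 0 s)
    (ht0 : t 0 = s) (hh : ∀ i, h (t i) = (1 - t (i + 1)) / (1 - t i)) :
    ∑' i : ℕ, μ ^ (-(i : ℤ)) * (μ - h (t i)) * ((1 - t i) / (1 - s)) * Real.log (1 - t i)
      - ∑' i : ℕ, μ ^ (-(i : ℤ)) * h (t i) * ((1 - t i) / (1 - s)) * Real.log (h (t i))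
      = μ * Real.log (1 - s) := by
  obtain ⟨-, hS₂, hS₃⟩ := summable_orbit_series hμ hs ht hh
  set a : ℕ → ℝ :=
    fun i => μ * (μ ^ (-(i : ℤ)) * ((1 - t i) / (1 - s) * Real.log (1 - t i)))
  have hc : 0 < 1 - s := sub_pos.2 hs
  have hμ0 : μ ≠ 0 := (zero_lt_one.trans hμ).ne'
  have hstep : ∀ i : ℕ,
      μ ^ (-(i : ℤ)) * (μ - h (t i)) * ((1 - t i) / (1 - s)) * Real.log (1 - t i)
        - μ ^ (-(i : ℤ)) * h (t i) * ((1 - t i) / (1 - s)) * Real.log (h (t i))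
        = a i - a (i + 1) := by
    intro i
    have hu₀ := hc.trans_le (one_sub_orbit_mem_Icc ht i).1
    have hu₁ := hc.trans_le (one_sub_orbit_mem_Icc ht (i + 1)).1
    simp only [a, hh i, Real.log_div hu₁.ne' hu₀.ne', zpow_neg_natCast_eq_inv_pow, pow_succ]
    field_simp
    ring
  have ha : Tendsto a atTop (𝓝 0) := by
    obtain ⟨hr, -, -, hlogu⟩ := orbit_terms_isBigO_one hs ht hh
    have hsum := summable_zpow_neg_mul_of_isBigO_one hμ
      (by simpa only [mul_one] using hr.mul hlogu)
    simpa only [mul_zero] using hsum.tendsto_atTop_zero.const_mul μ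
  rw [← hS₃.tsum_sub hS₂, tsum_congr hstep,
    (hasSum_sub_succ ((hS₃.sub hS₂).congr hstep) ha).tsum_eq]
  simp [a, ht0, div_self hc.ne']

theorem stmt_12_general (p : ℕ → ℝ) (hp0 : ∀ k, 0 ≤ p k) (hp1 : ∑' k, p k = 1)
    (f : ℝ → ℝ) (hf : ∀ s, f s = ∑' k : ℕ, p k * s ^ k)
    (μ : ℝ) (hμ : 1 < μ)
    (q : ℝ) (hq : q ∈ Ico (0:ℝ) 1) (hqfix : f q = q)
    (h g γ : ℝ → ℝ)
    (hh : ∀ s, h s = (1 - f s) / (1 - s))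
    (hg : ∀ s, g s = (μ - 1) / μ * ∑' i : ℕ, f^[i] s / μ ^ i)
    (hγ : ∀ s, γ s = (1 - g s) / (1 - s))
    (κ : ℝ) :
    ∀ s ∈ Ioo q 1,
      Summable (fun i : ℕ => |μ ^ (-(i:ℤ)) * ((1 - f^[i] s) / (1 - s))|) ∧
      Summable (fun i : ℕ =>
        |μ ^ (-(i:ℤ)) * h (f^[i] s) * ((1 - f^[i] s) / (1 - s)) * Real.log (h (f^[i] s))|) ∧
      Summable (fun i : ℕ =>
        |μ ^ (-(i:ℤ)) * (μ - h (f^[i] s)) * ((1 - f^[i] s) / (1 - s)) * Real.log (1 - f^[i] s)|) ∧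
      γ s + κ * Real.log (1 - s) =
        (μ - 1) / μ * ∑' i : ℕ, μ ^ (-(i:ℤ)) * ((1 - f^[i] s) / (1 - s))
        - κ / μ * ∑' i : ℕ,
            μ ^ (-(i:ℤ)) * h (f^[i] s) * ((1 - f^[i] s) / (1 - s)) * Real.log (h (f^[i] s))
        + κ / μ * ∑' i : ℕ,
            μ ^ (-(i:ℤ)) * (μ - h (f^[i] s)) * ((1 - f^[i] s) / (1 - s)) * Real.log (1 - f^[i] s) := by
  obtain rfl : f = pgf p := funext hf
  have hp : Summable p := by
    by_contra hp
    simp [tsum_eq_zero_of_not_summable hp] at hp1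
  intro s hs
  have horbit : ∀ i, (pgf p)^[i] s ∈ Icc 0 s := fun i =>
    (mapsTo_pgf_Icc hp0 hp hp1 hq hqfix (Ioo_subset_Icc_self hs)).iterate i
      ⟨hq.1.trans hs.1.le, le_rfl⟩
  have hratio : ∀ i, h ((pgf p)^[i] s) = (1 - (pgf p)^[i + 1] s) / (1 - (pgf p)^[i] s) :=
    fun i => by rw [hh, Function.iterate_succ_apply']
  obtain ⟨hS₁, hS₂, hS₃⟩ := summable_orbit_series hμ hs.2 horbit hratio
  refine ⟨hS₁.abs, hS₂.abs, hS₃.abs, ?_⟩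
  have hgeo : Summable fun i => (pgf p)^[i] s / μ ^ i :=
    (summable_zpow_neg_mul_of_isBigO_one hμ (isBigO_one_of_mem_Icc horbit)).congr fun i => by
      rw [zpow_neg, zpow_natCast, div_eq_inv_mul]
  have htel := tsum_sub_tsum_orbit_series hμ hs.2 horbit rfl hratio
  rw [hγ, hg, one_sub_mul_tsum_div_pow_div hμ hgeo,
    ← mul_div_cancel_left₀ (Real.log (1 - s)) (zero_lt_one.trans hμ).ne', ← htel]
  ring

theorem stmt_12 (p : ℕ → ℝ) (hp0 : ∀ k, 0 ≤ p k) (hp1 : ∑' k, p k = 1)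
    (f : ℝ → ℝ) (hf : ∀ s, f s = ∑' k : ℕ, p k * s ^ k)
    (μ : ℝ) (hμdef : μ = ∑' k : ℕ, (k : ℝ) * p k) (hμ : 1 < μ)
    (q : ℝ) (hq : q ∈ Ico (0:ℝ) 1) (hqfix : f q = q)
    (h g γ : ℝ → ℝ)
    (hh : ∀ s, h s = (1 - f s) / (1 - s))
    (hg : ∀ s, g s = (μ - 1) / μ * ∑' i : ℕ, f^[i] s / μ ^ i)
    (hγ : ∀ s, γ s = (1 - g s) / (1 - s))
    (κ : ℝ) (hκ : κ = (μ - 1) / (μ * Real.log μ)) :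
    ∀ s ∈ Ioo q 1,
      Summable (fun i : ℕ => |μ ^ (-(i:ℤ)) * ((1 - f^[i] s) / (1 - s))|) ∧
      Summable (fun i : ℕ =>
        |μ ^ (-(i:ℤ)) * h (f^[i] s) * ((1 - f^[i] s) / (1 - s)) * Real.log (h (f^[i] s))|) ∧
      Summable (fun i : ℕ =>
        |μ ^ (-(i:ℤ)) * (μ - h (f^[i] s)) * ((1 - f^[i] s) / (1 - s)) * Real.log (1 - f^[i] s)|) ∧
      γ s + κ * Real.log (1 - s) =
        (μ - 1) / μ * ∑' i : ℕ, μ ^ (-(i:ℤ)) * ((1 - f^[i] s) / (1 - s))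
        - κ / μ * ∑' i : ℕ,
            μ ^ (-(i:ℤ)) * h (f^[i] s) * ((1 - f^[i] s) / (1 - s)) * Real.log (h (f^[i] s))
        + κ / μ * ∑' i : ℕ,
            μ ^ (-(i:ℤ)) * (μ - h (f^[i] s)) * ((1 - f^[i] s) / (1 - s)) * Real.log (1 - f^[i] s) :=
  stmt_12_general p hp0 hp1 f hf μ hμ q hq hqfix h g γ hh hg hγ κ
end orbit
end

section
/- Let μ ≥ 2 be an integer, define g(s) = ((μ − 1)/μ)·Σ_{i=0}^∞ s^{μ^i}/μ^i and γ(s) = (1 − g(s))/(1 − s) for s ∈ [0,1). Then the sequence n ↦ γ(e^{−μ^{−n}}) − n·(μ − 1)/μ converges to a finite limit as n → ∞ through the natural numbers. -/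
open Filter Topology

/-!
With `s n = exp (-μ⁻ⁿ)` we have `s (n + 1) ^ μ = s n`, and the functional equation
`g t = (μ - 1) / μ * t + g (t ^ μ) / μ` of the lacunary series becomes the affine recurrence
`γ (s (n + 1)) = r n * γ (s n) + (μ - 1) / μ` with `r n = (1 - s n) / (μ * (1 - s (n + 1)))`.
Bernoulli's inequality gives `r n ≤ 1` and elementary bounds on `exp` give `1 - r n ≤ 2 μ⁻ⁿ`.
As `γ ≥ 0`, the recurrence lets `γ (s n)` grow at most linearly, so the increments
`(1 - r n) * γ (s n)` of `γ (s n) - n (μ - 1) / μ` are summable.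
-/

noncomputable def lacunarySum (μ : ℕ) (t : ℝ) : ℝ := ∑' i : ℕ, t ^ μ ^ i / (μ : ℝ) ^ i

noncomputable def lacunaryGamma (μ : ℕ) (t : ℝ) : ℝ :=
  (1 - ((μ : ℝ) - 1) / μ * lacunarySum μ t) / (1 - t)

section Lacunary

variable {μ : ℕ} {t : ℝ}

lemma norm_lacunary_term_le (hμ : 1 < μ) (ht : |t| ≤ 1) (i : ℕ) :
    ‖t ^ μ ^ i / (μ : ℝ) ^ i‖ ≤ (μ : ℝ)⁻¹ ^ i := by
  rw [norm_div, norm_pow, norm_pow, Real.norm_eq_abs, Real.norm_natCast, inv_pow,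
    div_le_iff₀ (by positivity), inv_mul_cancel₀ (by positivity)]
  exact pow_le_one₀ (abs_nonneg t) ht

lemma summable_lacunary (hμ : 1 < μ) (ht : |t| ≤ 1) :
    Summable fun i : ℕ => t ^ μ ^ i / (μ : ℝ) ^ i :=
  .of_norm_bounded
    (summable_geometric_of_lt_one (by positivity) (inv_lt_one_of_one_lt₀ (by exact_mod_cast hμ)))
    (norm_lacunary_term_le hμ ht)

lemma lacunarySum_le (hμ : 1 < μ) (ht : |t| ≤ 1) :
    lacunarySum μ t ≤ (1 - (μ : ℝ)⁻¹)⁻¹ := by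
  have hq : (μ : ℝ)⁻¹ < 1 := inv_lt_one_of_one_lt₀ (by exact_mod_cast hμ)
  rw [lacunarySum, ← tsum_geometric_of_lt_one (by positivity) hq]
  exact (summable_lacunary hμ ht).tsum_le_tsum
    (fun i => (le_abs_self _).trans (norm_lacunary_term_le hμ ht i))
    (summable_geometric_of_lt_one (by positivity) hq)

lemma lacunarySum_eq_add (hμ : 1 < μ) (ht : |t| ≤ 1) :
    lacunarySum μ t = t + lacunarySum μ (t ^ μ) / μ := by
  have hshift (i : ℕ) :
      t ^ μ ^ (i + 1) / (μ : ℝ) ^ (i + 1) = (t ^ μ) ^ μ ^ i / (μ : ℝ) ^ i / μ := by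
    rw [pow_succ', pow_mul, pow_succ, div_div]
  rw [lacunarySum, (summable_lacunary hμ ht).tsum_eq_zero_add]
  simp only [hshift, tsum_div_const, pow_zero, pow_one, div_one, lacunarySum]

lemma lacunaryGamma_nonneg (hμ : 1 < μ) (ht : |t| ≤ 1) : 0 ≤ lacunaryGamma μ t := by
  have hμ0 : (1 : ℝ) < μ := by exact_mod_cast hμ
  have hcoef : ((μ : ℝ) - 1) / μ * (1 - (μ : ℝ)⁻¹)⁻¹ = 1 := by
    have : (μ : ℝ) - 1 ≠ 0 := by linarith
    field_simp
  have hL := mul_le_mul_of_nonneg_left (lacunarySum_le hμ ht)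
    (div_nonneg (sub_nonneg.2 hμ0.le) (by positivity) : 0 ≤ ((μ : ℝ) - 1) / μ)
  exact div_nonneg (by linarith) (by linarith [le_abs_self t])

lemma lacunaryGamma_eq (hμ : 1 < μ) (ht : |t| < 1) :
    lacunaryGamma μ t =
      (1 - t ^ μ) / (μ * (1 - t)) * lacunaryGamma μ (t ^ μ) + ((μ : ℝ) - 1) / μ := by
  have h1 : 1 - t ≠ 0 := by linarith [le_abs_self t]
  have h2 : 1 - t ^ μ ≠ 0 := by
    have : |t ^ μ| < 1 := by rw [abs_pow]; exact pow_lt_one₀ (abs_nonneg t) ht (by omega)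
    linarith [le_abs_self (t ^ μ)]
  have hμ0 : (μ : ℝ) ≠ 0 := by positivity
  rw [lacunaryGamma, lacunaryGamma, lacunarySum_eq_add hμ ht.le]
  field_simp
  ring

end Lacunary

lemma one_sub_pow_div_le_one {t : ℝ} (ht0 : 0 ≤ t) (ht1 : t < 1) {m : ℕ} (hm : 0 < m) :
    (1 - t ^ m) / (m * (1 - t)) ≤ 1 := by
  have hbernoulli := one_add_mul_le_pow (a := t - 1) (by linarith) m
  rw [add_sub_cancel] at hbernoulli
  rw [div_le_one (mul_pos (by exact_mod_cast hm) (by linarith))]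
  linarith

lemma div_one_add_le_one_sub_exp_neg {y : ℝ} (hy : 0 ≤ y) : y / (1 + y) ≤ 1 - Real.exp (-y) := by
  have : Real.exp (-y) ≤ (1 + y)⁻¹ := by
    rw [Real.exp_neg]
    exact inv_anti₀ (by linarith) (by linarith [Real.add_one_le_exp y])
  have h : (1 + y)⁻¹ = 1 - y / (1 + y) := by field_simp; ring
  linarith

lemma one_sub_div_one_sub_exp_neg_le {m : ℕ} (hm : 0 < m) {y : ℝ} (hy0 : 0 < y) (hy1 : y ≤ 1) :
    1 - (1 - Real.exp (-y) ^ m) / (m * (1 - Real.exp (-y))) ≤ 2 * m * y := by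
  have hmR : (0 : ℝ) < m := by exact_mod_cast hm
  have hpow : Real.exp (-y) ^ m = Real.exp (-(m * y)) := by
    rw [← Real.exp_nat_mul]; ring_nf
  have hupper : 1 - Real.exp (-y) ≤ y := by linarith [Real.one_sub_le_exp_neg y]
  have hlower : y / 2 ≤ 1 - Real.exp (-y) :=
    (div_le_div_of_nonneg_left hy0.le (by positivity) (by linarith)).trans
      (div_one_add_le_one_sub_exp_neg hy0.le)
  have hmy : m * y / (1 + m * y) ≤ 1 - Real.exp (-y) ^ m :=
    hpow ▸ div_one_add_le_one_sub_exp_neg (by positivity)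
  have hden : 0 < m * (1 - Real.exp (-y)) := by nlinarith
  have hnum : m * (1 - Real.exp (-y)) - (1 - Real.exp (-y) ^ m) ≤ (m * y) ^ 2 := by
    have : m * y - m * y / (1 + m * y) ≤ (m * y) ^ 2 := by
      rw [sub_le_iff_le_add, ← sub_le_iff_le_add', le_div_iff₀ (by positivity)]
      nlinarith [mul_pos hmR hy0]
    nlinarith
  rw [one_sub_div hden.ne', div_le_iff₀ hden]
  nlinarith

lemma exists_tendsto_sub_nat_mul_of_recurrence {a r : ℕ → ℝ} {c C q : ℝ}
    (hq0 : 0 ≤ q) (hq1 : q < 1)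
    (ha : ∀ n, 0 ≤ a n) (hrec : ∀ n, a (n + 1) = r n * a n + c) (hr : ∀ n, r n ≤ 1)
    (herr : ∀ n, 1 - r n ≤ C * q ^ n) :
    ∃ ℓ, Tendsto (fun n : ℕ => a n - n * c) atTop (𝓝 ℓ) := by
  have hdiff (n : ℕ) : (a n - n * c) - (a (n + 1) - (n + 1 : ℕ) * c) = (1 - r n) * a n := by
    rw [hrec]; push_cast; ring
  have hgrowth (n : ℕ) : a n ≤ a 0 + n * c := by
    induction n with
    | zero => simp
    | succ n ih =>
      have := hdiff n
      nlinarith [mul_nonneg (sub_nonneg.2 (hr n)) (ha n)]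
  have hdist (n : ℕ) : dist (a n - n * c) (a (n + 1) - (n + 1 : ℕ) * c) ≤
      C * q ^ n * (a 0 + n * c) := by
    rw [Real.dist_eq, hdiff, abs_of_nonneg (mul_nonneg (sub_nonneg.2 (hr n)) (ha n))]
    exact mul_le_mul (herr n) (hgrowth n) (ha n) ((sub_nonneg.2 (hr n)).trans (herr n))
  have hsum : Summable fun n : ℕ => C * q ^ n * (a 0 + n * c) := by
    have hgeom := summable_geometric_of_lt_one hq0 hq1
    have harith : Summable fun n : ℕ => (n : ℝ) * q ^ n := by
      simpa using summable_pow_mul_geometric_of_norm_lt_one 1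
        (by rwa [Real.norm_eq_abs, abs_of_nonneg hq0] : ‖q‖ < 1)
    exact ((hgeom.mul_left (C * a 0)).add (harith.mul_left (C * c))).congr fun n => by ring
  exact cauchySeq_tendsto_of_complete (cauchySeq_of_dist_le_of_summable _ hdist hsum)

theorem stmt_14 (μ : ℕ) (hμ : 2 ≤ μ) (g γ : ℝ → ℝ)
    (hg : ∀ s, g s = ((μ : ℝ) - 1) / μ * ∑' i : ℕ, s ^ (μ ^ i) / (μ : ℝ) ^ i)
    (hγ : ∀ s, γ s = (1 - g s) / (1 - s)) :
    ∃ ℓ : ℝ, Tendsto (fun n : ℕ => γ (Real.exp (-((μ : ℝ) ^ n)⁻¹)) - n * ((μ : ℝ) - 1) / μ)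
      atTop (𝓝 ℓ) := by
  have hγ' : γ = lacunaryGamma μ := funext fun s => by rw [hγ, hg]; rfl
  set s : ℕ → ℝ := fun n => Real.exp (-((μ : ℝ) ^ n)⁻¹)
  have hμ1 : 1 < μ := by omega
  have hs_pow (n : ℕ) : s (n + 1) ^ μ = s n := by
    simp only [s, ← Real.exp_nat_mul]
    congr 1
    field_simp
    ring
  have hs_abs (n : ℕ) : |s n| < 1 := by
    rw [abs_of_pos (Real.exp_pos _), Real.exp_lt_one_iff]
    simp only [Left.neg_neg_iff, inv_pos]
    positivity
  obtain ⟨ℓ, hℓ⟩ := exists_tendsto_sub_nat_mul_of_recurrence (a := fun n => lacunaryGamma μ (s n))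
    (r := fun n => (1 - s (n + 1) ^ μ) / (μ * (1 - s (n + 1)))) (C := 2)
    (inv_nonneg.2 (Nat.cast_nonneg μ)) (inv_lt_one_of_one_lt₀ (by exact_mod_cast hμ1))
    (fun n => lacunaryGamma_nonneg hμ1 (hs_abs n).le)
    (fun n => by simpa only [hs_pow] using lacunaryGamma_eq hμ1 (hs_abs (n + 1)))
    (fun n => one_sub_pow_div_le_one (Real.exp_pos _).le (lt_of_abs_lt (hs_abs (n + 1)))
      (by omega))
    (fun n => by
      have hy : (0 : ℝ) < ((μ : ℝ) ^ (n + 1))⁻¹ := by positivity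
      refine (one_sub_div_one_sub_exp_neg_le (by omega) hy
        (inv_le_one_of_one_le₀ (one_le_pow₀ (by exact_mod_cast hμ1.le)))).trans_eq ?_
      rw [pow_succ, inv_pow]
      field_simp)
  exact ⟨ℓ, by simpa only [hγ', mul_div_assoc] using hℓ⟩
end

section
/- Let T ∈ ℝ and let z : [T,∞) → (0,1] be continuous with ∫_T^∞ (1 − z(u))/z(u) du < ∞ and ∫_T^∞ (u − T)·(1 − z(u))/z(u) du < ∞. Let ϑ : [T,∞) → ℝ be differentiable and satisfy ϑ(t) = 1 + z(t)·(ϑ(t) − ϑ'(t)) for all t ≥ T. Then the limit as t → ∞ of ϑ(t) − t exists and is a finite real number. -/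
open MeasureTheory Filter Topology Set

/-!
Writing `w = (1 - z) / z ≥ 0`, the equation reads `ϑ' = 1 - (ϑ - 1) w`. A fencing argument shows
that `ϑ - 1` grows at most linearly, so `|(ϑ - t)'| = |ϑ - 1| w ≤ (C + 2 (t - T)) w`, which is
integrable by the two moment conditions on `w`. A function with integrable derivative on a
half-line has a limit at infinity.
-/

section OneSubMulODE

variable {y y' w : ℝ → ℝ} {a : ℝ}

/-- The slope `2` rather than `1` makes the fence strict where `w` vanishes. -/
theorem abs_le_of_hasDerivAt_eq_one_sub_mul (hy : ∀ t ∈ Ici a, HasDerivAt y (y' t) t)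
    (hw : ∀ t ∈ Ici a, 0 ≤ w t) (hode : ∀ t ∈ Ici a, y' t = 1 - y t * w t)
    {t : ℝ} (ht : a ≤ t) :
    |y t| ≤ |y a| + 2 * (t - a) := by
  have hcont : ContinuousOn y (Icc a t) := fun x hx =>
    (hy x hx.1).continuousAt.continuousWithinAt
  have hy_lower : -y t ≤ |y a| := by
    refine image_le_of_deriv_right_lt_deriv_boundary (f := fun x => -y x) (f' := fun x => -y' x)
      (B' := fun _ => 0) hcont.neg (fun x hx => (hy x hx.1).neg.hasDerivWithinAt) (neg_le_abs _)
      (fun _ => hasDerivAt_const _ _) (fun x hx hxB => ?_) ⟨ht, le_rfl⟩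
    have hyx : y x ≤ 0 := by linarith [abs_nonneg (y a)]
    have := mul_nonpos_of_nonpos_of_nonneg hyx (hw x hx.1)
    simp only [hode x hx.1]
    linarith
  have hy_upper : y t ≤ |y a| + 2 * (t - a) := by
    have hB : ∀ x, HasDerivAt (fun s => |y a| + 2 * (s - a)) 2 x := fun x => by
      simpa using (((hasDerivAt_id x).sub_const a).const_mul 2).const_add |y a|
    refine image_le_of_deriv_right_lt_deriv_boundary (f' := y') hcont
      (fun x hx => (hy x hx.1).hasDerivWithinAt) (by simp [le_abs_self]) hB
      (fun x hx hxB => ?_) ⟨ht, le_rfl⟩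
    have hyx : 0 ≤ y x := by rw [hxB]; linarith [abs_nonneg (y a), hx.1]
    have := mul_nonneg hyx (hw x hx.1)
    simp only [hode x hx.1]
    linarith
  exact abs_le.2 ⟨by linarith, hy_upper⟩

theorem integrableOn_deriv_sub_one_of_hasDerivAt_eq_one_sub_mul
    (hy : ∀ t ∈ Ici a, HasDerivAt y (y' t) t)
    (hw : ∀ t ∈ Ici a, 0 ≤ w t) (hode : ∀ t ∈ Ici a, y' t = 1 - y t * w t)
    (hw_int : IntegrableOn w (Ioi a))
    (hw_moment : IntegrableOn (fun t => (t - a) * w t) (Ioi a)) :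
    IntegrableOn (fun t => y' t - 1) (Ioi a) := by
  refine Integrable.mono' ((hw_int.const_mul |y a|).add (hw_moment.const_mul 2)) ?_ ?_
  · refine ((measurable_deriv y).sub_const 1).aestronglyMeasurable.congr ?_
    filter_upwards [ae_restrict_mem measurableSet_Ioi] with t ht
    rw [(hy t (Ioi_subset_Ici_self ht)).deriv]
  · filter_upwards [ae_restrict_mem measurableSet_Ioi] with t ht
    have ht' : t ∈ Ici a := Ioi_subset_Ici_self ht
    rw [hode t ht', sub_sub_cancel_left, norm_neg, Real.norm_eq_abs, abs_mul,
      abs_of_nonneg (hw t ht')]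
    calc |y t| * w t ≤ (|y a| + 2 * (t - a)) * w t :=
          mul_le_mul_of_nonneg_right
            (abs_le_of_hasDerivAt_eq_one_sub_mul hy hw hode ht') (hw t ht')
      _ = |y a| * w t + 2 * ((t - a) * w t) := by ring

theorem exists_tendsto_sub_id_of_hasDerivAt_eq_one_sub_mul
    (hy : ∀ t ∈ Ici a, HasDerivAt y (y' t) t)
    (hw : ∀ t ∈ Ici a, 0 ≤ w t) (hode : ∀ t ∈ Ici a, y' t = 1 - y t * w t)
    (hw_int : IntegrableOn w (Ioi a))
    (hw_moment : IntegrableOn (fun t => (t - a) * w t) (Ioi a)) :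
    ∃ ℓ : ℝ, Tendsto (fun t => y t - t) atTop (𝓝 ℓ) :=
  ⟨_, tendsto_limUnder_of_hasDerivAt_of_integrableOn_Ioi
    (fun t ht => (hy t (Ioi_subset_Ici_self ht)).sub (hasDerivAt_id t))
    (integrableOn_deriv_sub_one_of_hasDerivAt_eq_one_sub_mul hy hw hode hw_int hw_moment)⟩

end OneSubMulODE

theorem stmt_15_general (T : ℝ) (z : ℝ → ℝ)
    (hzrange : ∀ t ∈ Ici T, z t ∈ Ioc (0:ℝ) 1)
    (hint1 : IntegrableOn (fun u => (1 - z u) / z u) (Ici T))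
    (hint2 : IntegrableOn (fun u => (u - T) * ((1 - z u) / z u)) (Ici T))
    (ϑ ϑ' : ℝ → ℝ)
    (hderiv : ∀ t ∈ Ici T, HasDerivAt ϑ (ϑ' t) t)
    (heq : ∀ t ∈ Ici T, ϑ t = 1 + z t * (ϑ t - ϑ' t)) :
    ∃ ℓ : ℝ, Tendsto (fun t => ϑ t - t) atTop (𝓝 ℓ) := by
  have hw : ∀ t ∈ Ici T, 0 ≤ (1 - z t) / z t := fun t ht =>
    div_nonneg (sub_nonneg.2 (hzrange t ht).2) (hzrange t ht).1.le
  have hode : ∀ t ∈ Ici T, ϑ' t = 1 - (ϑ t - 1) * ((1 - z t) / z t) := by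
    intro t ht
    have hz : z t ≠ 0 := (hzrange t ht).1.ne'
    field_simp
    linear_combination heq t ht
  obtain ⟨ℓ, hℓ⟩ := exists_tendsto_sub_id_of_hasDerivAt_eq_one_sub_mul
    (y := fun t => ϑ t - 1) (fun t ht => (hderiv t ht).sub_const 1) hw hode
    (hint1.mono_set Ioi_subset_Ici_self) (hint2.mono_set Ioi_subset_Ici_self)
  exact ⟨ℓ + 1, by convert hℓ.add_const 1 using 2; ring⟩

theorem stmt_15 (T : ℝ) (z : ℝ → ℝ)
    (hzrange : ∀ t ∈ Ici T, z t ∈ Ioc (0:ℝ) 1)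
    (hzcont : ContinuousOn z (Ici T))
    (hint1 : IntegrableOn (fun u => (1 - z u) / z u) (Ici T))
    (hint2 : IntegrableOn (fun u => (u - T) * ((1 - z u) / z u)) (Ici T))
    (ϑ ϑ' : ℝ → ℝ)
    (hderiv : ∀ t ∈ Ici T, HasDerivAt ϑ (ϑ' t) t)
    (heq : ∀ t ∈ Ici T, ϑ t = 1 + z t * (ϑ t - ϑ' t)) :
    ∃ ℓ : ℝ, Tendsto (fun t => ϑ t - t) atTop (𝓝 ℓ) :=
  stmt_15_general T z hzrange hint1 hint2 ϑ ϑ' hderiv heq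
end

section
/- Let ν be a Borel probability measure on (0,∞), let μ > 1 and β > 0 satisfy μ·∫₀^∞ e^{−βu} dν(u) = 1, and let G_β be the probability measure on (0,∞) with dG_β(u) = μ·e^{−βu} dν(u). Let w : [0,∞) → [0,μ] be measurable and let 𝒳 : [0,∞) → [0,∞) be bounded and measurable, satisfying 𝒳(t) = ∫₀^∞ w(t+u)·𝒳(t+u)·e^{−βu} dν(u) for all t ≥ 0. Then for every integer n ≥ 1 and every t ≥ 0, 𝒳(t) = ∫₀^∞ 𝒳(t+u) dG_β^{*n}(u) − ∫₀^∞ (1 − w(t+u)/μ)·𝒳(t+u) d(Σ_{i=1}^n G_β^{*i})(u), where G_β^{*i} denotes the i-fold convolution of G_β with itself. -/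
open MeasureTheory Set

/-- `convPow G n` is the `n`-fold convolution power `G^{*n}` of the measure `G` on `ℝ`
(`G^{*0}` is the Dirac mass at `0`). -/
noncomputable def convPow (G : Measure ℝ) : ℕ → Measure ℝ
  | 0 => Measure.dirac 0
  | n + 1 => Measure.map (fun pr : ℝ × ℝ => pr.1 + pr.2) ((convPow G n).prod G)

lemma convPow_isProb (G : Measure ℝ) [IsProbabilityMeasure G] (n : ℕ) :
    IsProbabilityMeasure (convPow G n) := by
  induction n with
  | zero => rw [convPow]; infer_instance
  | succ n ih =>
    rw [convPow]
    have : IsProbabilityMeasure ((convPow G n).prod G) := by infer_instance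
    exact Measure.isProbabilityMeasure_map (by fun_prop)

lemma convPow_one (G : Measure ℝ) [IsProbabilityMeasure G] : convPow G 1 = G := by
  rw [convPow, convPow, Measure.dirac_prod,
    Measure.map_map (by fun_prop) (by fun_prop)]
  have : ((fun pr : ℝ × ℝ => pr.1 + pr.2) ∘ Prod.mk (0:ℝ)) = id := by
    funext x; simp
  rw [this, Measure.map_id]

lemma convPow_ae_nonneg (G : Measure ℝ) [IsProbabilityMeasure G]
    (hG : ∀ᵐ u ∂G, 0 ≤ u) : ∀ n, ∀ᵐ u ∂convPow G n, 0 ≤ u := by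
  intro n
  induction n with
  | zero =>
    rw [convPow]
    exact (ae_dirac_iff measurableSet_Ici).mpr le_rfl
  | succ n ih =>
    have := convPow_isProb G n
    rw [convPow, ae_map_iff (by fun_prop) measurableSet_Ici]
    have h1 : ∀ᵐ p : ℝ × ℝ ∂(convPow G n).prod G, 0 ≤ p.1 := by
      rw [ae_iff]
      have : {p : ℝ × ℝ | ¬ 0 ≤ p.1} = {x : ℝ | ¬ 0 ≤ x} ×ˢ univ := by
        ext p; simp
      rw [this, Measure.prod_prod]
      rw [ae_iff] at ih
      rw [ih, zero_mul]
    have h2 : ∀ᵐ p : ℝ × ℝ ∂(convPow G n).prod G, 0 ≤ p.2 := by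
      rw [ae_iff]
      have : {p : ℝ × ℝ | ¬ 0 ≤ p.2} = univ ×ˢ {x : ℝ | ¬ 0 ≤ x} := by
        ext p; simp
      rw [this, Measure.prod_prod]
      rw [ae_iff] at hG
      rw [hG, mul_zero]
    filter_upwards [h1, h2] with p hp1 hp2
    exact add_nonneg hp1 hp2

lemma integrable_of_bdd (m : Measure ℝ) [IsFiniteMeasure m] (f : ℝ → ℝ)
    (hf : Measurable f) (C : ℝ) (h : ∀ x, |f x| ≤ C) : Integrable f m :=
  (integrable_const C).mono' hf.aestronglyMeasurable (Filter.Eventually.of_forall fun x => by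
    simpa using h x)

lemma integral_convPow_succ (G : Measure ℝ) [IsProbabilityMeasure G] (n : ℕ)
    (f : ℝ → ℝ) (hf : Measurable f) (C : ℝ) (hC : ∀ x, |f x| ≤ C) :
    ∫ s, f s ∂convPow G (n + 1) = ∫ u, ∫ v, f (u + v) ∂G ∂convPow G n := by
  have := convPow_isProb G n
  have hint : Integrable (fun p : ℝ × ℝ => f (p.1 + p.2)) ((convPow G n).prod G) :=
    (integrable_const C).mono' (hf.comp measurable_add).aestronglyMeasurable
      (Filter.Eventually.of_forall fun p => by
      simpa using hC (p.1 + p.2))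
  rw [convPow, integral_map (by fun_prop) (by fun_prop), integral_prod _ hint]

theorem stmt_16 (ν : Measure ℝ) [IsProbabilityMeasure ν] (hν : ν (Iic 0) = 0)
    (μ β : ℝ) (hμ : 1 < μ) (hβ : 0 < β)
    (hmal : μ * ∫ u, Real.exp (-β * u) ∂ν = 1)
    (Gβ : Measure ℝ)
    (hGβ : Gβ = ν.withDensity (fun u => ENNReal.ofReal (μ * Real.exp (-β * u))))
    (w : ℝ → ℝ) (hwmeas : Measurable w) (hwrange : ∀ t, w t ∈ Icc (0:ℝ) μ)
    (X : ℝ → ℝ) (hXmeas : Measurable X) (hXbdd : ∃ C : ℝ, ∀ t, X t ∈ Icc (0:ℝ) C)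
    (hXeq : ∀ t ≥ (0:ℝ), X t = ∫ u, w (t + u) * X (t + u) * Real.exp (-β * u) ∂ν) :
    ∀ n : ℕ, 1 ≤ n → ∀ t ≥ (0:ℝ),
      X t = (∫ u, X (t + u) ∂(convPow Gβ n))
        - ∫ u, (1 - w (t + u) / μ) * X (t + u) ∂(∑ i ∈ Finset.range n, convPow Gβ (i + 1)) := by
  obtain ⟨C, hC⟩ := hXbdd
  have hμ0 : (0:ℝ) < μ := lt_trans one_pos hμ
  have hCX : ∀ s, |X s| ≤ C := fun s => abs_le.mpr ⟨by linarith [(hC s).1, (hC 0).1, (hC 0).2],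
    (hC s).2⟩
  -- a.e. positivity w.r.t. ν
  have hνpos : ∀ᵐ u ∂ν, 0 < u := by
    rw [ae_iff]
    have : {u : ℝ | ¬ 0 < u} = Iic 0 := by ext u; simp
    rw [this]; exact hν
  -- density as an NNReal-valued function
  set ρ : ℝ → ℝ := fun u => μ * Real.exp (-β * u) with hρ
  have hρ0 : ∀ u, 0 ≤ ρ u := fun u => mul_nonneg hμ0.le (Real.exp_pos _).le
  have hρmeas : Measurable ρ := by fun_prop
  have hGβ' : Gβ = ν.withDensity (fun u => ((Real.toNNReal (ρ u) : NNReal) : ENNReal)) := hGβ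
  have hintGβ : ∀ (g : ℝ → ℝ), ∫ v, g v ∂Gβ = ∫ v, ρ v * g v ∂ν := by
    intro g
    rw [hGβ', integral_withDensity_eq_integral_smul (by fun_prop)]
    refine integral_congr_ae (Filter.Eventually.of_forall fun v => ?_)
    simp [NNReal.smul_def, Real.coe_toNNReal _ (hρ0 v)]
  -- Gβ is a probability measure
  have hexp_int : Integrable ρ ν := by
    refine (integrable_const μ).mono' hρmeas.aestronglyMeasurable ?_
    filter_upwards [hνpos] with u hu
    rw [Real.norm_eq_abs, abs_of_nonneg (hρ0 u)]
    have : Real.exp (-β * u) ≤ 1 := by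
      rw [Real.exp_le_one_iff]
      nlinarith
    simp only [hρ]
    nlinarith [Real.exp_pos (-β * u)]
  have hGprob : IsProbabilityMeasure Gβ := by
    constructor
    rw [hGβ, withDensity_apply _ MeasurableSet.univ]
    rw [setLIntegral_univ, ← ofReal_integral_eq_lintegral_ofReal hexp_int
      (Filter.Eventually.of_forall hρ0)]
    have : ∫ u, ρ u ∂ν = 1 := by
      rw [hρ]
      simpa [integral_const_mul] using hmal
    rw [this, ENNReal.ofReal_one]
  have hGae : ∀ᵐ u ∂Gβ, 0 ≤ u := by
    rw [hGβ]
    exact (MeasureTheory.withDensity_absolutelyContinuous ν _) (by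
      filter_upwards [hνpos] with u hu using hu.le)
  -- one-step identity
  have key : ∀ s ≥ (0:ℝ), X s = ∫ v, (w (s + v) / μ) * X (s + v) ∂Gβ := by
    intro s hs
    rw [hintGβ, hXeq s hs]
    refine integral_congr_ae (Filter.Eventually.of_forall fun v => ?_)
    rw [hρ]
    field_simp
  -- bounds used for integrability
  have hbd1 : ∀ t s : ℝ, |X (t + s)| ≤ C := fun t s => hCX _
  have hbd2 : ∀ t s : ℝ, |(1 - w (t + s) / μ) * X (t + s)| ≤ C := by
    intro t s
    rw [abs_mul]
    have hw := hwrange (t + s)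
    have h1 : |1 - w (t + s) / μ| ≤ 1 := by
      rw [abs_le]
      constructor
      · have : w (t + s) / μ ≤ 1 := (div_le_one hμ0).mpr hw.2
        linarith
      · have : 0 ≤ w (t + s) / μ := div_nonneg hw.1 hμ0.le
        linarith
    calc |1 - w (t + s) / μ| * |X (t + s)| ≤ 1 * C := by
          exact mul_le_mul h1 (hCX _) (abs_nonneg _) one_pos.le
      _ = C := one_mul C
  have hbd3 : ∀ t s : ℝ, |(w (t + s) / μ) * X (t + s)| ≤ C := by
    intro t s
    rw [abs_mul]
    have hw := hwrange (t + s)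
    have h1 : |w (t + s) / μ| ≤ 1 := by
      rw [abs_of_nonneg (div_nonneg hw.1 hμ0.le)]
      exact (div_le_one hμ0).mpr hw.2
    calc |w (t + s) / μ| * |X (t + s)| ≤ 1 * C :=
          mul_le_mul h1 (hCX _) (abs_nonneg _) one_pos.le
      _ = C := one_mul C
  have hmeas1 : ∀ t : ℝ, Measurable fun s => X (t + s) := fun t => by fun_prop
  have hmeas2 : ∀ t : ℝ, Measurable fun s => (1 - w (t + s) / μ) * X (t + s) := fun t => by
    fun_prop
  have hmeas3 : ∀ t : ℝ, Measurable fun s => (w (t + s) / μ) * X (t + s) := fun t => by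
    fun_prop
  -- one-step split identity
  have step : ∀ s ≥ (0:ℝ), X s = (∫ v, X (s + v) ∂Gβ)
      - ∫ v, (1 - w (s + v) / μ) * X (s + v) ∂Gβ := by
    intro s hs
    rw [← integral_sub (integrable_of_bdd Gβ _ (hmeas1 s) C (hbd1 s))
      (integrable_of_bdd Gβ _ (hmeas2 s) C (hbd2 s)), key s hs]
    refine integral_congr_ae (Filter.Eventually.of_forall fun v => ?_)
    ring
  -- main induction
  intro n hn
  induction n, hn using Nat.le_induction with
  | base =>
    intro t ht
    have hsum : (∑ i ∈ Finset.range 1, convPow Gβ (i + 1)) = Gβ := by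
      rw [Finset.sum_range_one, convPow_one]
    rw [hsum, convPow_one]
    exact step t ht
  | succ n hn ih =>
    intro t ht
    have hprobn := convPow_isProb Gβ n
    have hprobn1 := convPow_isProb Gβ (n + 1)
    have hnn := convPow_ae_nonneg Gβ hGae n
    -- rewrite ∫ X(t+u) d(convPow n) as ∫ F d(convPow (n+1)) with F s = (w(t+s)/μ) X(t+s)
    have hA : ∫ u, X (t + u) ∂convPow Gβ n
        = ∫ s, (w (t + s) / μ) * X (t + s) ∂convPow Gβ (n + 1) := by
      rw [integral_convPow_succ Gβ n _ (hmeas3 t) C (hbd3 t)]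
      refine integral_congr_ae ?_
      filter_upwards [hnn] with u hu
      have := key (t + u) (by linarith)
      rw [this]
      refine integral_congr_ae (Filter.Eventually.of_forall fun v => ?_)
      simp only [add_assoc]
    have hF : ∫ s, (w (t + s) / μ) * X (t + s) ∂convPow Gβ (n + 1)
        = (∫ s, X (t + s) ∂convPow Gβ (n + 1))
          - ∫ s, (1 - w (t + s) / μ) * X (t + s) ∂convPow Gβ (n + 1) := by
      rw [← integral_sub (integrable_of_bdd _ _ (hmeas1 t) C (hbd1 t))
        (integrable_of_bdd _ _ (hmeas2 t) C (hbd2 t))]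
      refine integral_congr_ae (Filter.Eventually.of_forall fun s => ?_)
      ring
    have hsum : ∫ u, (1 - w (t + u) / μ) * X (t + u)
          ∂(∑ i ∈ Finset.range (n + 1), convPow Gβ (i + 1))
        = (∫ u, (1 - w (t + u) / μ) * X (t + u) ∂(∑ i ∈ Finset.range n, convPow Gβ (i + 1)))
          + ∫ u, (1 - w (t + u) / μ) * X (t + u) ∂convPow Gβ (n + 1) := by
      rw [Finset.sum_range_succ]
      refine integral_add_measure ?_ ?_
      · rw [integrable_finset_sum_measure]
        intro i _
        have := convPow_isProb Gβ (i + 1)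
        exact integrable_of_bdd _ _ (hmeas2 t) C (hbd2 t)
      · exact integrable_of_bdd _ _ (hmeas2 t) C (hbd2 t)
    have := ih t ht
    rw [hA, hF] at this
    rw [hsum]
    linarith
end

section
/- Let π be a probability mass function on ℕ with probability generating function f(s) = Σ_{k≥0} π_k s^k and mean μ = Σ_{k≥0} k·π_k satisfying 1 < μ < ∞, and set h(s) = (1 − f(s))/(1 − s). Let λ > 0, β = λ(μ − 1), and let F : [0,∞) × [0,1) → [0,1) satisfy F_0(s) = s and the backward Kolmogorov equation ∂_t F_t(s) = λ·(f(F_t(s)) − F_t(s)) for all t ≥ 0 and s ∈ [0,1). Define H_t(s) = (1 − F_t(s))/(1 − s). Then for all t ≥ 0 and s ∈ [0,1), e^{βt} − H_t(s) = λ·∫₀^t (μ − h(F_{t−u}(s)))·H_{t−u}(s)·e^{βu} du. -/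
/-! With `ψ τ = H_τ(s)`, the Kolmogorov equation gives `ψ' = λ (h(F) - 1) ψ` wherever `F < 1`,
so `β ψ - ψ' = λ (μ - h(F)) ψ`, and the identity is the fundamental theorem of calculus for
`u ↦ ψ(t - u) e^{βu}`. The derivative is integrable because `f`, a power series with summable
coefficients, is continuous on `[-1, 1]`. -/

open Set intervalIntegral

theorem continuousOn_tsum_mul_pow_of_summable {p : ℕ → ℝ} (hp : Summable p) :
    ContinuousOn (fun x => ∑' k, p k * x ^ k) (Icc (-1) 1) := by
  refine continuousOn_tsum (fun k => (continuous_const.mul (continuous_pow k)).continuousOn)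
    (summable_abs_iff.mpr hp) fun k x hx => ?_
  rw [Real.norm_eq_abs, abs_mul, abs_pow]
  exact mul_le_of_le_one_right (abs_nonneg _) (pow_le_one₀ (abs_nonneg x) (abs_le.mpr hx))

theorem continuousOn_one_sub_tsum_mul_pow_div {p : ℕ → ℝ} (hp : Summable p) :
    ContinuousOn (fun x => (1 - ∑' k, p k * x ^ k) / (1 - x)) (Ico 0 1) :=
  (continuousOn_const.sub ((continuousOn_tsum_mul_pow_of_summable hp).mono
      fun x hx => ⟨by linarith [hx.1], hx.2.le⟩)).div
    (continuousOn_const.sub continuousOn_id) fun x hx => sub_ne_zero.mpr hx.2.ne'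

theorem integral_sub_mul_exp_eq {ψ ψ' : ℝ → ℝ} {β t : ℝ} (ht : 0 ≤ t)
    (hψ : ∀ τ ∈ Icc 0 t, HasDerivAt ψ (ψ' τ) τ) (hψ' : ContinuousOn ψ' (Icc 0 t)) :
    ∫ u in (0:ℝ)..t, (β * ψ (t - u) - ψ' (t - u)) * Real.exp (β * u) =
      Real.exp (β * t) * ψ 0 - ψ t := by
  have hmaps : MapsTo (fun u => t - u) (Icc 0 t) (Icc 0 t) := fun u hu =>
    ⟨by linarith [hu.2], by linarith [hu.1]⟩
  have hderiv : ∀ u ∈ Icc 0 t, HasDerivAt (fun u => ψ (t - u) * Real.exp (β * u))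
      ((β * ψ (t - u) - ψ' (t - u)) * Real.exp (β * u)) u := by
    intro u hu
    have hrev : HasDerivAt (fun u => ψ (t - u)) (-ψ' (t - u)) u := by
      simpa using (hψ _ (hmaps hu)).comp_const_sub t u
    have hexp : HasDerivAt (fun u => Real.exp (β * u)) (Real.exp (β * u) * β) u := by
      simpa using ((hasDerivAt_id u).const_mul β).exp
    exact (hrev.mul hexp).congr_deriv (by ring)
  have hψc : ContinuousOn ψ (Icc 0 t) := fun τ hτ => (hψ τ hτ).continuousAt.continuousWithinAt
  have hcont : ContinuousOn (fun u => (β * ψ (t - u) - ψ' (t - u)) * Real.exp (β * u))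
      (Icc 0 t) := by
    have hsub : ContinuousOn (fun u : ℝ => t - u) (Icc 0 t) := by fun_prop
    exact ((continuousOn_const.mul (hψc.comp hsub hmaps)).sub (hψ'.comp hsub hmaps)).mul
      (by fun_prop)
  rw [integral_eq_sub_of_hasDerivAt (fun u hu => hderiv u (uIcc_of_le ht ▸ hu))
    ((uIcc_of_le ht).symm ▸ hcont).intervalIntegrable]
  simp [mul_comm]

theorem hasDerivAt_one_sub_div {F g : ℝ → ℝ} {lam s τ : ℝ}
    (hF : HasDerivAt F (lam * (g (F τ) - F τ)) τ) (hFτ : F τ ≠ 1) :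
    HasDerivAt (fun τ => (1 - F τ) / (1 - s))
      (lam * ((1 - g (F τ)) / (1 - F τ) - 1) * ((1 - F τ) / (1 - s))) τ := by
  refine ((hF.const_sub 1).div_const (1 - s)).congr_deriv ?_
  have : 1 - F τ ≠ 0 := sub_ne_zero.mpr hFτ.symm
  field_simp
  ring

theorem stmt_18_general (p : ℕ → ℝ) (hp1 : ∑' k, p k = 1)
    (f : ℝ → ℝ) (hf : ∀ s, f s = ∑' k : ℕ, p k * s ^ k)
    (μ : ℝ)
    (h : ℝ → ℝ) (hh : ∀ s, h s = (1 - f s) / (1 - s))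
    (lam β : ℝ) (hβ : β = lam * (μ - 1))
    (F : ℝ → ℝ → ℝ)
    (hF0 : ∀ s ∈ Ico (0:ℝ) 1, F 0 s = s)
    (hFrange : ∀ t ≥ (0:ℝ), ∀ s ∈ Ico (0:ℝ) 1, F t s ∈ Ico (0:ℝ) 1)
    (hFderiv : ∀ t ≥ (0:ℝ), ∀ s ∈ Ico (0:ℝ) 1,
      HasDerivAt (fun τ => F τ s) (lam * (f (F t s) - F t s)) t)
    (H : ℝ → ℝ → ℝ) (hH : ∀ t s, H t s = (1 - F t s) / (1 - s)) :
    ∀ t ≥ (0:ℝ), ∀ s ∈ Ico (0:ℝ) 1,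
      Real.exp (β * t) - H t s =
        lam * ∫ u in (0:ℝ)..t, (μ - h (F (t - u) s)) * H (t - u) s * Real.exp (β * u) := by
  intro t ht s hs
  have hsum : Summable p := by
    by_contra hns
    simp [tsum_eq_zero_of_not_summable hns] at hp1
  have hhc : ContinuousOn h (Ico 0 1) :=
    (continuousOn_one_sub_tsum_mul_pow_div hsum).congr fun x _ => by rw [hh, hf]
  have hFs : ∀ τ ∈ Icc 0 t, F τ s ∈ Ico 0 1 := fun τ hτ => hFrange τ hτ.1 s hs
  have hψ : ∀ τ ∈ Icc 0 t, HasDerivAt (fun τ => H τ s)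
      (lam * (h (F τ s) - 1) * H τ s) τ := by
    intro τ hτ
    simp only [hH, hh]
    exact hasDerivAt_one_sub_div (hFderiv τ hτ.1 s hs) (hFs τ hτ).2.ne
  have hψ' : ContinuousOn (fun τ => lam * (h (F τ s) - 1) * H τ s) (Icc 0 t) := by
    have hFc : ContinuousOn (fun τ => F τ s) (Icc 0 t) := fun τ hτ =>
      (hFderiv τ hτ.1 s hs).continuousAt.continuousWithinAt
    have hHc : ContinuousOn (fun τ => H τ s) (Icc 0 t) := fun τ hτ =>
      (hψ τ hτ).continuousAt.continuousWithinAt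
    exact (continuousOn_const.mul ((hhc.comp hFc hFs).sub continuousOn_const)).mul hHc
  have hduhamel := integral_sub_mul_exp_eq (β := β) ht hψ hψ'
  rw [← integral_const_mul]
  simp only [hH 0, hF0 s hs, div_self (sub_ne_zero.mpr hs.2.ne'), mul_one] at hduhamel
  rw [← hduhamel]
  refine integral_congr fun u _ => ?_
  simp only [hβ]
  ring

theorem stmt_18 (p : ℕ → ℝ) (hp0 : ∀ k, 0 ≤ p k) (hp1 : ∑' k, p k = 1)
    (f : ℝ → ℝ) (hf : ∀ s, f s = ∑' k : ℕ, p k * s ^ k)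
    (μ : ℝ) (hμdef : μ = ∑' k : ℕ, (k : ℝ) * p k) (hμ : 1 < μ)
    (h : ℝ → ℝ) (hh : ∀ s, h s = (1 - f s) / (1 - s))
    (lam β : ℝ) (hlam : 0 < lam) (hβ : β = lam * (μ - 1))
    (F : ℝ → ℝ → ℝ)
    (hF0 : ∀ s ∈ Ico (0:ℝ) 1, F 0 s = s)
    (hFrange : ∀ t ≥ (0:ℝ), ∀ s ∈ Ico (0:ℝ) 1, F t s ∈ Ico (0:ℝ) 1)
    (hFderiv : ∀ t ≥ (0:ℝ), ∀ s ∈ Ico (0:ℝ) 1,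
      HasDerivAt (fun τ => F τ s) (lam * (f (F t s) - F t s)) t)
    (H : ℝ → ℝ → ℝ) (hH : ∀ t s, H t s = (1 - F t s) / (1 - s)) :
    ∀ t ≥ (0:ℝ), ∀ s ∈ Ico (0:ℝ) 1,
      Real.exp (β * t) - H t s =
        lam * ∫ u in (0:ℝ)..t, (μ - h (F (t - u) s)) * H (t - u) s * Real.exp (β * u) :=
  stmt_18_general p hp1 f hf μ h hh lam β hβ F hF0 hFrange hFderiv H hH
end

section
/- Let G be a life-time distribution function on [0,∞) with G(0) = 0 and lim_{t→∞} G(t) = 1, let μ > 1 and β > 0 satisfy μ·∫₀^∞ e^{−βt} dG(t) = 1, and set n₁ = (μ − 1)/(β μ² ∫₀^∞ t e^{−βt} dG(t)). For y ≥ 0 with G(y) < 1 let G_y(t) = (G(y+t) − G(y))/(1 − G(y)) and V(y) = ∫₀^∞ e^{−βu} dG_y(u). Let M : [0,∞) → [0,∞) be measurable and locally bounded with ∫₀^∞ |e^{−βt} M_t − n₁| dt < ∞, and define M_t[y] = (1 − G_y(t)) + μ·∫₀^t M_{t−u} dG_y(u). Then ∫₀^∞ |e^{−βt} M_t[y] −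 n₁·μ·V(y)| dt < ∞. -/
/-!
With `g s = e^{-βs} M_s - n₁`, multiplying the renewal equation for `M_t[y]` by `e^{-βt}` gives,
for `t > 0`,
`e^{-βt} M_t[y] - n₁ μ V = e^{-βt} (1 - G_y(t)) + μ ∫_{[0,t]} g(t-u) e^{-βu} dG_y(u)`
`  - μ n₁ ∫_{(t,∞)} e^{-βu} dG_y(u)`.
The first and last terms are bounded by multiples of `e^{-βt}`, and the middle one is the
convolution of the integrable `g` with the finite measure `e^{-βu} dG_y(u)`, hence integrable.
-/

open MeasureTheory Set ProbabilityTheory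

theorem integrable_setIntegral_Icc_comp_sub_mul {ρ : Measure ℝ} [SFinite ρ] {f w : ℝ → ℝ}
    (hf : IntegrableOn f (Ici 0)) (hw : IntegrableOn w (Ici 0) ρ) :
    Integrable (fun t => ∫ u in Icc 0 t, f (t - u) * w u ∂ρ) := by
  have hprod := (hw.integrable_indicator measurableSet_Ici).convolution_integrand
    (ContinuousLinearMap.mul ℝ ℝ) (hf.integrable_indicator measurableSet_Ici) (μ := volume)
  refine hprod.integral_prod_left.congr (.of_forall fun t => ?_)
  dsimp only
  rw [← integral_indicator measurableSet_Icc]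
  congr 1 with u
  -- `u ∈ Icc 0 t` iff `u ∈ Ici 0` and `t - u ∈ Ici 0`
  simp only [ContinuousLinearMap.mul_apply', indicator_apply, mem_Icc, mem_Ici, sub_nonneg]
  split_ifs <;> first | tauto | ring

section ResidualLifetime

variable {ν : Measure ℝ} {y : ℝ}

theorem residual_eq_map_cond [IsProbabilityMeasure ν] :
    (ENNReal.ofReal (1 - (ν (Iic y)).toReal))⁻¹ •
        Measure.map (fun v => v - y) (ν.restrict (Ioi y)) =
      Measure.map (fun v => v - y) ν[|Ioi y] := by
  rw [ProbabilityTheory.cond, Measure.map_smul, ← compl_Iic,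
    prob_compl_eq_one_sub measurableSet_Iic, ENNReal.ofReal_sub _ ENNReal.toReal_nonneg,
    ENNReal.ofReal_one, ENNReal.ofReal_toReal (measure_ne_top _ _)]

theorem isProbabilityMeasure_map_cond_Ioi [IsProbabilityMeasure ν]
    (hy : (ν (Iic y)).toReal < 1) :
    IsProbabilityMeasure (Measure.map (fun v => v - y) ν[|Ioi y]) := by
  have : ν (Ioi y) ≠ 0 := by
    rw [← compl_Iic, prob_compl_eq_one_sub measurableSet_Iic, ne_eq, tsub_eq_zero_iff_le,
      not_le, ← ENNReal.ofReal_toReal (measure_ne_top ν (Iic y))]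
    exact ENNReal.ofReal_lt_one.2 hy
  have := cond_isProbabilityMeasure this
  exact Measure.isProbabilityMeasure_map (measurable_sub_const y).aemeasurable

theorem ae_pos_map_cond_Ioi : ∀ᵐ u ∂Measure.map (fun v => v - y) ν[|Ioi y], 0 < u := by
  rw [ae_map_iff (measurable_sub_const y).aemeasurable measurableSet_Ioi]
  filter_upwards [ae_cond_mem measurableSet_Ioi] with v hv
  exact sub_pos.2 hv

end ResidualLifetime

section Laplace

variable {ρ : Measure ℝ} {β : ℝ}

theorem integrable_exp_neg_mul [IsFiniteMeasure ρ] (hρ : ∀ᵐ u ∂ρ, 0 ≤ u) (hβ : 0 ≤ β) :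
    Integrable (fun u => Real.exp (-β * u)) ρ := by
  refine (integrable_const 1).mono' (by fun_prop) ?_
  filter_upwards [hρ] with u hu
  rw [Real.norm_of_nonneg (Real.exp_pos _).le, Real.exp_le_one_iff]
  nlinarith

theorem abs_setIntegral_Icc_exp_neg_mul_sub_le [IsProbabilityMeasure ρ] (hρ : ∀ᵐ u ∂ρ, 0 ≤ u)
    (hβ : 0 ≤ β) (t : ℝ) :
    |∫ u in Icc 0 t, Real.exp (-β * u) ∂ρ - ∫ u, Real.exp (-β * u) ∂ρ| ≤ Real.exp (-β * t) := by
  have hint := integrable_exp_neg_mul hρ hβ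
  rw [← integral_add_compl measurableSet_Icc hint, sub_add_cancel_left, abs_neg,
    abs_of_nonneg (integral_nonneg fun u => (Real.exp_pos _).le)]
  calc ∫ u in (Icc 0 t)ᶜ, Real.exp (-β * u) ∂ρ
      ≤ ∫ _ in (Icc 0 t)ᶜ, Real.exp (-β * t) ∂ρ := by
        refine integral_mono_ae hint.integrableOn (integrable_const _) ?_
        filter_upwards [ae_restrict_of_ae hρ, ae_restrict_mem measurableSet_Icc.compl]
          with u hu hut
        have : t < u := by
          by_contra h
          exact hut ⟨hu, not_lt.1 h⟩
        exact Real.exp_le_exp.2 (by nlinarith)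
    _ ≤ Real.exp (-β * t) := by
        rw [setIntegral_const, smul_eq_mul]
        exact mul_le_of_le_one_left (Real.exp_pos _).le measureReal_le_one

theorem integrableOn_Ioi_setIntegral_Icc_exp_neg_mul_sub [IsProbabilityMeasure ρ]
    (hρ : ∀ᵐ u ∂ρ, 0 ≤ u) (hβ : 0 < β) :
    IntegrableOn (fun t => ∫ u in Icc 0 t, Real.exp (-β * u) ∂ρ - ∫ u, Real.exp (-β * u) ∂ρ)
      (Ioi 0) := by
  have hmono : Monotone fun t => ∫ u in Icc 0 t, Real.exp (-β * u) ∂ρ := fun s t hst =>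
    setIntegral_mono_set (integrable_exp_neg_mul hρ hβ.le).integrableOn
      (.of_forall fun u => (Real.exp_pos _).le) (Icc_subset_Icc le_rfl hst).eventuallyLE
  exact (exp_neg_integrableOn_Ioi 0 hβ).mono' (hmono.measurable.sub_const _).aestronglyMeasurable
    (.of_forall fun t => abs_setIntegral_Icc_exp_neg_mul_sub_le hρ hβ.le t)

theorem integrableOn_Ioi_exp_neg_mul_mul_one_sub_cdf [IsProbabilityMeasure ρ] (hβ : 0 < β) :
    IntegrableOn (fun t => Real.exp (-β * t) * (1 - ρ.real (Iic t))) (Ioi 0) := by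
  have hmono : Monotone fun t => ρ.real (Iic t) := fun s t hst =>
    measureReal_mono (Iic_subset_Iic.2 hst)
  refine (exp_neg_integrableOn_Ioi 0 hβ).mul_bdd
    (hmono.measurable.const_sub 1).aestronglyMeasurable (c := 1) (.of_forall fun t => ?_)
  rw [← probReal_compl_eq_one_sub measurableSet_Iic, Real.norm_of_nonneg measureReal_nonneg]
  exact measureReal_le_one

end Laplace

theorem setIntegral_exp_mul_comp_sub_sub_mul_exp {ρ : Measure ℝ} {s : Set ℝ} {M : ℝ → ℝ}
    {β n t : ℝ} (hM : IntegrableOn (fun u => M (t - u)) s ρ)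
    (hexp : IntegrableOn (fun u => Real.exp (-β * u)) s ρ) :
    ∫ u in s, (Real.exp (-β * (t - u)) * M (t - u) - n) * Real.exp (-β * u) ∂ρ =
      Real.exp (-β * t) * ∫ u in s, M (t - u) ∂ρ - n * ∫ u in s, Real.exp (-β * u) ∂ρ := by
  have hfun : (fun u => (Real.exp (-β * (t - u)) * M (t - u) - n) * Real.exp (-β * u)) =
      fun u => Real.exp (-β * t) * M (t - u) - n * Real.exp (-β * u) := by
    ext u
    rw [sub_mul, mul_right_comm, ← Real.exp_add]
    ring_nf
  rw [hfun, integral_sub (hM.const_mul _) (hexp.const_mul _), integral_const_mul,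
    integral_const_mul]

theorem stmt_19_general
    -- life-time distribution: ν is the measure of G, G t = ν (Iic t)
    (ν : Measure ℝ) [IsProbabilityMeasure ν]
    (μ β : ℝ) (hβpos : 0 < β)
    (n₁ : ℝ)
    -- the age y and its residual life-time distribution (the measure of G_y)
    (y : ℝ) (hGy : (ν (Iic y)).toReal < 1)
    (residy : Measure ℝ)
    (hresidy : residy =
      (ENNReal.ofReal (1 - (ν (Iic y)).toReal))⁻¹ •
        Measure.map (fun v => v - y) (ν.restrict (Ioi y)))
    (V : ℝ) (hV : V = ∫ u, Real.exp (-β * u) ∂residy)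
    -- the expected population size M_t from a newborn particle
    (M : ℝ → ℝ) (hMmeas : Measurable M)
    (hMlocbdd : ∀ r : ℝ, ∃ C : ℝ, ∀ t ∈ Icc (0:ℝ) r, |M t| ≤ C)
    (hMint : IntegrableOn (fun t => Real.exp (-β * t) * M t - n₁) (Ioi (0:ℝ)))
    -- the expected population size M_t[y] from a particle aged y
    (My : ℝ → ℝ)
    (hMy : ∀ t ≥ (0:ℝ), My t =
      (1 - (residy (Iic t)).toReal) + μ * ∫ u in Icc (0:ℝ) t, M (t - u) ∂residy) :
    IntegrableOn (fun t => Real.exp (-β * t) * My t - n₁ * μ * V) (Ioi (0:ℝ)) := by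
  rw [residual_eq_map_cond] at hresidy
  have : IsProbabilityMeasure residy := hresidy ▸ isProbabilityMeasure_map_cond_Ioi hGy
  have hpos : ∀ᵐ u ∂residy, 0 ≤ u := hresidy ▸ ae_pos_map_cond_Ioi.mono fun _ => le_of_lt
  have hexp := integrable_exp_neg_mul hpos hβpos.le
  have hg : IntegrableOn (fun t => Real.exp (-β * t) * M t - n₁) (Ici 0) := by
    rwa [integrableOn_Ici_iff_integrableOn_Ioi]
  have hsurv := integrableOn_Ioi_exp_neg_mul_mul_one_sub_cdf (ρ := residy) hβpos
  have hconv := integrable_setIntegral_Icc_comp_sub_mul hg hexp.integrableOn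
  have htail := integrableOn_Ioi_setIntegral_Icc_exp_neg_mul_sub hpos hβpos
  refine ((hsurv.add (hconv.integrableOn.const_mul μ)).add (htail.const_mul (μ * n₁))).congr_fun
    (fun t ht => ?_) measurableSet_Ioi
  obtain ⟨C, hC⟩ := hMlocbdd t
  have hMt : IntegrableOn (fun u => M (t - u)) (Icc 0 t) residy :=
    Measure.integrableOn_of_bounded (measure_ne_top _ _)
      (hMmeas.comp (measurable_const.sub measurable_id)).aestronglyMeasurable (M := C)
      (ae_restrict_of_forall_mem measurableSet_Icc fun u hu =>
        (Real.norm_eq_abs _).trans_le (hC _ ⟨sub_nonneg.2 hu.2, sub_le_self _ hu.1⟩))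
  simp only [Pi.add_apply]
  rw [hMy t (le_of_lt ht), setIntegral_exp_mul_comp_sub_sub_mul_exp hMt hexp.integrableOn, hV,
    measureReal_def]
  ring

theorem stmt_19
    -- life-time distribution: ν is the measure of G, G t = ν (Iic t)
    (ν : Measure ℝ) [IsProbabilityMeasure ν] (hν0 : ν (Iic 0) = 0)
    (μ β : ℝ) (hμ : 1 < μ) (hβpos : 0 < β)
    (hmalthus : μ * ∫ t, Real.exp (-β * t) ∂ν = 1)
    (n₁ : ℝ) (hn₁ : n₁ = (μ - 1) / (β * μ ^ 2 * ∫ t, t * Real.exp (-β * t) ∂ν))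
    -- the age y and its residual life-time distribution (the measure of G_y)
    (y : ℝ) (hy : 0 ≤ y) (hGy : (ν (Iic y)).toReal < 1)
    (residy : Measure ℝ)
    (hresidy : residy =
      (ENNReal.ofReal (1 - (ν (Iic y)).toReal))⁻¹ •
        Measure.map (fun v => v - y) (ν.restrict (Ioi y)))
    (V : ℝ) (hV : V = ∫ u, Real.exp (-β * u) ∂residy)
    -- the expected population size M_t from a newborn particle
    (M : ℝ → ℝ) (hMmeas : Measurable M)
    (hMlocbdd : ∀ r : ℝ, ∃ C : ℝ, ∀ t ∈ Icc (0:ℝ) r, |M t| ≤ C)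
    (hMint : IntegrableOn (fun t => Real.exp (-β * t) * M t - n₁) (Ioi (0:ℝ)))
    -- the expected population size M_t[y] from a particle aged y
    (My : ℝ → ℝ)
    (hMy : ∀ t ≥ (0:ℝ), My t =
      (1 - (residy (Iic t)).toReal) + μ * ∫ u in Icc (0:ℝ) t, M (t - u) ∂residy) :
    IntegrableOn (fun t => Real.exp (-β * t) * My t - n₁ * μ * V) (Ioi (0:ℝ)) :=
  stmt_19_general ν μ β hβpos n₁ y hGy residy hresidy V hV M hMmeas hMlocbdd hMint My hMy
end
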